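/- arXiv:2507.07040 — 3 statements merged into one kernel-verified Lean document; each statement's English description precedes it below -/
import Mathlib

section
/- If f and g are radially symmetric functions on ℝ^d with f ⊴ g (i.e. ∫_{B_r} f ≤ ∫_{B_r} g for all r ≥ 0, with equality at some R covering the supports), f radially non-increasing and non-negative, and Φ : ℝ → ℝ is convex non-decreasing and differentiable, then ∫_{B_R} Φ(f) ≤ ∫_{B_R} Φ(g), provided Φ'(f) is radially non-increasing and the integrals over B_R of f and g coincide. -/
open MeasureTheory Real Metric Set

noncomputable section

/-- Euclidean space ℝ^d. -/
abbrev Euc (d : ℕ) := EuclideanSpace ℝ (Fin d)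

/-!
Write `h = Φ' ∘ f` and `φ = g - f`. Convexity gives `Φ(g) - Φ(f) ≥ h φ` pointwise, so it suffices
to show `∫_{B_R} h φ ≥ 0`. Since `0 ≤ h ≤ h 0`, the layer-cake formula
`∫ h φ = ∫_0^{h 0} (∫_{h > t} φ) dt` replaces the paper's radial integration by parts. As `h` is
radially non-increasing, each superlevel set `{h > t}` is the whole space, an open ball or a closed
ball around the origin, and `f ⊴ g` makes the integral of `φ` over its intersection with `B_R`
non-negative: directly for open balls, and in the limit over slightly larger open balls otherwise.
-/

theorem integral_mul_eq_integral_setIntegral_setOf_lt {α : Type*} [MeasurableSpace α]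
    {μ : Measure α} [SFinite μ] {h φ : α → ℝ} {M : ℝ} (hh : Measurable h)
    (h0 : ∀ x, 0 ≤ h x) (hM : ∀ x, h x ≤ M) (hφ : Integrable φ μ) :
    ∫ x, h x * φ x ∂μ = ∫ t in Ioc 0 M, ∫ x in {x | t < h x}, φ x ∂μ := by
  set S : Set (α × ℝ) := {p | p.2 < h p.1}
  have hS : MeasurableSet S := measurableSet_lt measurable_snd (hh.comp measurable_fst)
  have hF : Integrable (S.indicator fun p => φ p.1) (μ.prod (volume.restrict (Ioc 0 M))) :=
    (hφ.comp_fst _).indicator hS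
  have hfiber : ∀ x, ∫ t in Ioc 0 M, S.indicator (fun p => φ p.1) (x, t) = h x * φ x := by
    intro x
    have hIoo : Iio (h x) ∩ Ioc 0 M = Ioo 0 (h x) := Set.ext fun t =>
      ⟨fun ⟨ht, ht0, _⟩ => ⟨ht0, ht⟩, fun ⟨ht0, ht⟩ => ⟨ht, ht0, ht.le.trans (hM x)⟩⟩
    change ∫ t in Ioc 0 M, (Iio (h x)).indicator (fun _ => φ x) t = _
    rw [integral_indicator_const _ measurableSet_Iio, measureReal_restrict_apply measurableSet_Iio,
      hIoo, volume_real_Ioo_of_le (h0 x), sub_zero, smul_eq_mul]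
  have hsection : ∀ t,
      ∫ x, S.indicator (fun p => φ p.1) (x, t) ∂μ = ∫ x in {x | t < h x}, φ x ∂μ :=
    fun t => integral_indicator (measurableSet_lt measurable_const hh)
  simp_rw [← hfiber, ← hsection]
  exact integral_integral_swap hF

section BallIntegrals

variable {X : Type*} [PseudoMetricSpace X] [MeasurableSpace X] [OpensMeasurableSpace X]
  {μ : Measure X} {φ : X → ℝ} {c : X}

theorem integral_nonneg_of_setIntegral_ball_nonneg (hφ : Integrable φ μ)
    (hball : ∀ r, 0 ≤ r → 0 ≤ ∫ x in ball c r, φ x ∂μ) : 0 ≤ ∫ x, φ x ∂μ := by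
  have hlim : Filter.Tendsto (fun n : ℕ => ∫ x in ball c n, φ x ∂μ) Filter.atTop
      (nhds (∫ x, φ x ∂μ)) := by
    rw [← setIntegral_univ, ← iUnion_ball_nat c]
    exact tendsto_setIntegral_of_monotone (fun _ => measurableSet_ball)
      (fun m n hmn => ball_subset_ball (Nat.cast_le.2 hmn))
      (by rw [iUnion_ball_nat]; exact hφ.integrableOn)
  exact ge_of_tendsto' hlim fun n => hball n n.cast_nonneg

theorem setIntegral_closedBall_nonneg_of_setIntegral_ball_nonneg (hφ : Integrable φ μ)
    (hball : ∀ r, 0 ≤ r → 0 ≤ ∫ x in ball c r, φ x ∂μ) {ρ : ℝ} (hρ : 0 ≤ ρ) :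
    0 ≤ ∫ x in closedBall c ρ, φ x ∂μ := by
  have hInter : ⋂ n : ℕ, ball c (ρ + 1 / (n + 1)) = closedBall c ρ := by
    ext x
    simp only [mem_iInter, mem_ball, mem_closedBall]
    refine ⟨fun hx => le_of_forall_pos_lt_add fun ε hε => ?_, fun hx n => ?_⟩
    · obtain ⟨n, hn⟩ := exists_nat_one_div_lt hε
      exact (hx n).trans (by linarith)
    · exact hx.trans_lt (lt_add_of_pos_right _ Nat.one_div_pos_of_nat)
  have hlim : Filter.Tendsto (fun n : ℕ => ∫ x in ball c (ρ + 1 / (n + 1)), φ x ∂μ)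
      Filter.atTop (nhds (∫ x in closedBall c ρ, φ x ∂μ)) := by
    rw [← hInter]
    refine tendsto_setIntegral_of_antitone (fun _ => measurableSet_ball)
      (fun m n hmn => ball_subset_ball ?_) ⟨0, hφ.integrableOn⟩
    gcongr
  exact ge_of_tendsto' hlim fun n => hball _ (by positivity)

end BallIntegrals

def IsNormLowerSet {E : Type*} [Norm E] (s : Set E) : Prop :=
  ∀ ⦃x y : E⦄, ‖x‖ ≤ ‖y‖ → y ∈ s → x ∈ s

def RadiallyAntitone {E : Type*} [Norm E] (h : E → ℝ) : Prop :=
  ∀ x y : E, ‖x‖ ≤ ‖y‖ → h y ≤ h x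

section Radial

variable {E : Type*} [SeminormedAddCommGroup E] {s : Set E} {h φ : E → ℝ}

theorem IsNormLowerSet.eq_univ_or_ball_or_closedBall (hs : IsNormLowerSet s) :
    s = univ ∨ ∃ ρ, 0 ≤ ρ ∧ (s = ball 0 ρ ∨ s = closedBall 0 ρ) := by
  rcases s.eq_empty_or_nonempty with rfl | ⟨x₀, hx₀⟩
  · exact Or.inr ⟨0, le_rfl, Or.inl ball_zero.symm⟩
  by_cases hb : BddAbove (norm '' s)
  swap
  · refine Or.inl (eq_univ_of_forall fun y => ?_)
    obtain ⟨_, ⟨x, hx, rfl⟩, hyx⟩ := not_bddAbove_iff.1 hb ‖y‖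
    exact hs hyx.le hx
  set ρ := sSup (norm '' s)
  have hρ : 0 ≤ ρ := (norm_nonneg x₀).trans (le_csSup hb (mem_image_of_mem _ hx₀))
  have hsub : s ⊆ closedBall 0 ρ := fun x hx =>
    mem_closedBall_zero_iff.2 (le_csSup hb (mem_image_of_mem _ hx))
  refine Or.inr ⟨ρ, hρ, ?_⟩
  by_cases hsphere : ∃ y ∈ s, ‖y‖ = ρ
  · obtain ⟨y, hy, hyρ⟩ := hsphere
    exact Or.inr (hsub.antisymm fun x hx => hs (hyρ ▸ mem_closedBall_zero_iff.1 hx) hy)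
  · refine Or.inl (subset_antisymm (fun x hx => ?_) fun y hy => ?_)
    · exact mem_ball_zero_iff.2 ((mem_closedBall_zero_iff.1 (hsub hx)).lt_of_ne
        fun hxρ => hsphere ⟨x, hx, hxρ⟩)
    · obtain ⟨_, ⟨x, hx, rfl⟩, hyx⟩ :=
        exists_lt_of_lt_csSup (Nonempty.image _ ⟨x₀, hx₀⟩) (mem_ball_zero_iff.1 hy)
      exact hs hyx.le hx

theorem IsNormLowerSet.measurableSet [MeasurableSpace E] [OpensMeasurableSpace E]
    (hs : IsNormLowerSet s) : MeasurableSet s := by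
  rcases hs.eq_univ_or_ball_or_closedBall with rfl | ⟨ρ, -, rfl | rfl⟩
  exacts [MeasurableSet.univ, measurableSet_ball, measurableSet_closedBall]

theorem IsNormLowerSet.setIntegral_nonneg [MeasurableSpace E] [OpensMeasurableSpace E]
    {μ : Measure E} (hs : IsNormLowerSet s) (hφ : Integrable φ μ)
    (hball : ∀ r, 0 ≤ r → 0 ≤ ∫ x in ball 0 r, φ x ∂μ) : 0 ≤ ∫ x in s, φ x ∂μ := by
  rcases hs.eq_univ_or_ball_or_closedBall with rfl | ⟨ρ, hρ, rfl | rfl⟩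
  · rw [setIntegral_univ]
    exact integral_nonneg_of_setIntegral_ball_nonneg hφ hball
  · exact hball ρ hρ
  · exact setIntegral_closedBall_nonneg_of_setIntegral_ball_nonneg hφ hball hρ

theorem RadiallyAntitone.isNormLowerSet_setOf_lt (hh : RadiallyAntitone h) (t : ℝ) :
    IsNormLowerSet {x | t < h x} :=
  fun x y hxy hy => lt_of_lt_of_le hy (hh x y hxy)

theorem RadiallyAntitone.le_apply_zero (hh : RadiallyAntitone h) (x : E) : h x ≤ h 0 :=
  hh 0 x (by simp)

theorem RadiallyAntitone.measurable [MeasurableSpace E] [OpensMeasurableSpace E]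
    (hh : RadiallyAntitone h) : Measurable h :=
  measurable_of_Ioi fun t => (hh.isNormLowerSet_setOf_lt t).measurableSet

theorem RadiallyAntitone.integrable_mul [MeasurableSpace E] [OpensMeasurableSpace E]
    {μ : Measure E} (hh : RadiallyAntitone h) (h0 : ∀ x, 0 ≤ h x) (hφ : Integrable φ μ) :
    Integrable (fun x => h x * φ x) μ :=
  hφ.bdd_mul hh.measurable.aestronglyMeasurable (c := h 0) <| Filter.Eventually.of_forall
    fun x => by rw [Real.norm_eq_abs, abs_of_nonneg (h0 x)]; exact hh.le_apply_zero x

theorem RadiallyAntitone.integral_mul_nonneg [MeasurableSpace E] [OpensMeasurableSpace E]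
    {μ : Measure E} [SFinite μ] (hh : RadiallyAntitone h) (h0 : ∀ x, 0 ≤ h x)
    (hφ : Integrable φ μ) (hball : ∀ r, 0 ≤ r → 0 ≤ ∫ x in ball 0 r, φ x ∂μ) :
    0 ≤ ∫ x, h x * φ x ∂μ := by
  rw [integral_mul_eq_integral_setIntegral_setOf_lt hh.measurable h0 hh.le_apply_zero hφ]
  exact setIntegral_nonneg measurableSet_Ioc fun t _ =>
    (hh.isNormLowerSet_setOf_lt t).setIntegral_nonneg hφ hball

end Radial

theorem ConvexOn.deriv_mul_sub_le {S : Set ℝ} {Φ : ℝ → ℝ} (hΦ : ConvexOn ℝ S Φ) {a b : ℝ}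
    (ha : a ∈ S) (hb : b ∈ S) (hd : DifferentiableAt ℝ Φ a) :
    deriv Φ a * (b - a) ≤ Φ b - Φ a := by
  rcases lt_trichotomy a b with hab | rfl | hab
  · have := hΦ.deriv_le_slope ha hb hab hd
    rwa [slope_def_field, le_div_iff₀ (sub_pos.2 hab)] at this
  · simp
  · have := hΦ.slope_le_deriv hb ha hab hd
    rw [slope_def_field, div_le_iff₀ (sub_pos.2 hab)] at this
    linarith

theorem concentration_comparison_general (d : ℕ) (f g : Euc d → ℝ) (R : ℝ) (hR : 0 < R)
    (hconc : ∀ r : ℝ, 0 ≤ r → (∫ x in ball (0 : Euc d) r, f x) ≤ ∫ x in ball (0 : Euc d) r, g x)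
    (Φ : ℝ → ℝ) (hconv : ConvexOn ℝ Set.univ Φ) (hΦmono : Monotone Φ)
    (hΦdiff : Differentiable ℝ Φ)
    (hΦ'mono : ∀ x y : Euc d, ‖x‖ ≤ ‖y‖ → deriv Φ (f y) ≤ deriv Φ (f x))
    (hif : IntegrableOn f (closedBall (0 : Euc d) R))
    (hig : IntegrableOn g (closedBall (0 : Euc d) R))
    (hiΦf : IntegrableOn (fun x => Φ (f x)) (closedBall (0 : Euc d) R))
    (hiΦg : IntegrableOn (fun x => Φ (g x)) (closedBall (0 : Euc d) R)) :
    (∫ x in ball (0 : Euc d) R, Φ (f x)) ≤ ∫ x in ball (0 : Euc d) R, Φ (g x) := by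
  set μ := volume.restrict (ball (0 : Euc d) R)
  have hf : Integrable f μ := hif.mono_set ball_subset_closedBall
  have hg : Integrable g μ := hig.mono_set ball_subset_closedBall
  have hball : ∀ r, 0 ≤ r → 0 ≤ ∫ x in ball 0 r, (g x - f x) ∂μ := by
    intro r hr
    have hinter : ball (0 : Euc d) r ∩ ball 0 R = ball 0 (min r R) := by
      ext x
      simp only [mem_inter_iff, mem_ball_zero_iff, lt_min_iff]
    rw [integral_sub hg.integrableOn hf.integrableOn, Measure.restrict_restrict measurableSet_ball,
      hinter]
    exact sub_nonneg.2 (hconc _ (le_min hr hR.le))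
  have hΦ' : RadiallyAntitone fun x => deriv Φ (f x) := hΦ'mono
  have hΦ'_nonneg : ∀ x, 0 ≤ deriv Φ (f x) := fun _ => hΦmono.deriv_nonneg
  have hweighted : 0 ≤ ∫ x, deriv Φ (f x) * (g x - f x) ∂μ :=
    hΦ'.integral_mul_nonneg hΦ'_nonneg (hg.sub hf) hball
  have hweighted_int := hΦ'.integrable_mul hΦ'_nonneg (hg.sub hf)
  have hΦf : Integrable (fun x => Φ (f x)) μ := hiΦf.mono_set ball_subset_closedBall
  calc ∫ x, Φ (f x) ∂μ
      ≤ ∫ x, Φ (f x) ∂μ + ∫ x, deriv Φ (f x) * (g x - f x) ∂μ :=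
        le_add_of_nonneg_right hweighted
    _ = ∫ x, (Φ (f x) + deriv Φ (f x) * (g x - f x)) ∂μ :=
        (integral_add hΦf hweighted_int).symm
    _ ≤ ∫ x, Φ (g x) ∂μ :=
        integral_mono (hΦf.add hweighted_int) (hiΦg.mono_set ball_subset_closedBall) fun x => by
          linarith [hconv.deriv_mul_sub_le (mem_univ (f x)) (mem_univ (g x)) (hΦdiff (f x))]

/-- Comparison of the integrals of `Φ(f)` and `Φ(g)` for radially symmetric functions
with `f` less concentrated than `g`, `f` radially non-increasing and non-negative,
`Φ` convex non-decreasing differentiable with `Φ'(f)` radially non-increasing, equal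
masses over `B_R`, and the supports contained in `B_R`. -/
theorem concentration_comparison (d : ℕ) (f g : Euc d → ℝ) (R : ℝ) (hR : 0 < R)
    (hfrad : ∀ x y : Euc d, ‖x‖ = ‖y‖ → f x = f y)
    (hgrad : ∀ x y : Euc d, ‖x‖ = ‖y‖ → g x = g y)
    (hconc : ∀ r : ℝ, 0 ≤ r → (∫ x in ball (0 : Euc d) r, f x) ≤ ∫ x in ball (0 : Euc d) r, g x)
    (heq : (∫ x in ball (0 : Euc d) R, f x) = ∫ x in ball (0 : Euc d) R, g x)
    (hsupf : Function.support f ⊆ closedBall (0 : Euc d) R)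
    (hsupg : Function.support g ⊆ closedBall (0 : Euc d) R)
    (hfmono : ∀ x y : Euc d, ‖x‖ ≤ ‖y‖ → f y ≤ f x)
    (hfpos : ∀ x, 0 ≤ f x)
    (Φ : ℝ → ℝ) (hconv : ConvexOn ℝ Set.univ Φ) (hΦmono : Monotone Φ)
    (hΦdiff : Differentiable ℝ Φ)
    (hΦ'mono : ∀ x y : Euc d, ‖x‖ ≤ ‖y‖ → deriv Φ (f y) ≤ deriv Φ (f x))
    (hif : IntegrableOn f (closedBall (0 : Euc d) R))
    (hig : IntegrableOn g (closedBall (0 : Euc d) R))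
    (hiΦf : IntegrableOn (fun x => Φ (f x)) (closedBall (0 : Euc d) R))
    (hiΦg : IntegrableOn (fun x => Φ (g x)) (closedBall (0 : Euc d) R)) :
    (∫ x in ball (0 : Euc d) R, Φ (f x)) ≤ ∫ x in ball (0 : Euc d) R, Φ (g x) :=
  concentration_comparison_general d f g R hR hconc Φ hconv hΦmono hΦdiff hΦ'mono hif hig hiΦf hiΦg
end
end

section
/- Let B ⊆ ℝ^d (d ≥ 2) be the ball of radius R centered at the origin and τ > 0. Then the radial function w(r) = (R² - r²)/(2dτ) + (R/(dτ^{3/2}))[ (I_ν(√τ r)/I_{ν+1}(√τ R)) (r/R)^{-ν} − I_ν(√τ R)/I_{ν+1}(√τ R) ], with ν = d/2 − 1 and I_μ the modified Bessel function of the first kind, satisfies Δ²w − τΔw = 1 in B, w = 0 on ∂B, and ∂_n w = 0 on ∂B. -/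
open MeasureTheory Real Metric Set

noncomputable section

/-- The modified Bessel function of the first kind `I_μ`, defined by its power series
`I_μ(x) = Σ_{k≥0} (x/2)^{2k+μ} / (k! Γ(k+μ+1))`. -/
def besselI (μ : ℝ) (x : ℝ) : ℝ :=
  ∑' k : ℕ, (x / 2) ^ (2 * (k : ℝ) + μ) / ((Nat.factorial k : ℝ) * Real.Gamma (k + μ + 1))

/-- The radial Laplacian in dimension `d`: `Δw(r) = w''(r) + ((d-1)/r) w'(r)`. -/
def radLap (d : ℕ) (w : ℝ → ℝ) (r : ℝ) : ℝ :=
  deriv (deriv w) r + ((d : ℝ) - 1) / r * deriv w r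
/-- The torsion function of the clamped ball of radius `R` under tension `τ > 0`:
`w(r) = (R²-r²)/(2dτ) + (R/(dτ^{3/2}))[(I_ν(√τ r)/I_{ν+1}(√τ R))(r/R)^{-ν} - I_ν(√τ R)/I_{ν+1}(√τ R)]`
with `ν = d/2 - 1`. -/
def torsionW (d : ℕ) (R τ r : ℝ) : ℝ :=
  (R ^ 2 - r ^ 2) / (2 * d * τ) +
    R / (d * τ ^ ((3 : ℝ) / 2)) *
      ((besselI ((d : ℝ) / 2 - 1) (Real.sqrt τ * r) /
            besselI ((d : ℝ) / 2 - 1 + 1) (Real.sqrt τ * R)) * (r / R) ^ (-((d : ℝ) / 2 - 1)) -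
        besselI ((d : ℝ) / 2 - 1) (Real.sqrt τ * R) /
          besselI ((d : ℝ) / 2 - 1 + 1) (Real.sqrt τ * R))

/-!
Write `I_ν(x) = (x/2)^ν E_ν(x²/4)` with the entire series `E_ν(z) = ∑ zⁿ / (n! Γ(n+ν+1))`.
Termwise, `E_ν' = E_{ν+1}` and `E_ν(z) = (ν+1) E_{ν+1}(z) + z E_{ν+2}(z)`, which together say that
`P(r) = E_ν(τr²/4)` solves `ΔP = τP` in dimension `d = 2ν + 2`. For `r > 0` the torsion function is
`(R² - r²)/(2dτ) + K (P(r) - P(R))`, so `Δw = -1/τ + KτP` and `Δ²w = Kτ²P`, whence `Δ²w - τΔw = 1`.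
The clamped condition `w'(R) = 0` comes from `(√τR/2)^ν P'(R) = √τ I_{ν+1}(√τR)`, which is the
identity `(r^{-ν} I_ν(kr))' = k r^{-ν} I_{ν+1}(kr)` in disguise.
-/

open Filter
open scoped Nat Topology

section PowerSeries

variable {a : ℕ → ℝ} {C : ℝ}

theorem summable_mul_pow_of_abs_le_div_factorial (ha : ∀ n, |a n| ≤ C / n !) (z : ℝ) :
    Summable fun n => a n * z ^ n := by
  refine .of_norm_bounded ((Real.summable_pow_div_factorial |z|).mul_left C) fun n => ?_
  calc ‖a n * z ^ n‖ = |a n| * |z| ^ n := by simp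
    _ ≤ C / n ! * |z| ^ n := by gcongr; exact ha n
    _ = C * (|z| ^ n / n !) := by ring

theorem hasDerivAt_tsum_mul_pow_of_abs_le_div_factorial (ha : ∀ n, |a n| ≤ C / n !) (z : ℝ) :
    HasDerivAt (fun y => ∑' n, a n * y ^ n) (∑' n, (n + 1) * a (n + 1) * z ^ n) z := by
  set ρ := |z| + 1
  have hρ : 1 ≤ ρ := le_add_of_nonneg_left (abs_nonneg z)
  have hz : z ∈ ball (0 : ℝ) ρ := by simp [ρ]
  have hbound : ∀ n, ∀ y ∈ ball (0 : ℝ) ρ,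
      ‖a n * (n * y ^ (n - 1))‖ ≤ C * ((2 * ρ) ^ n / n !) := by
    intro n y hy
    have hy : |y| ≤ ρ := (mem_ball_zero_iff.mp hy).le
    calc ‖a n * (n * y ^ (n - 1))‖ = |a n| * (n * |y| ^ (n - 1)) := by simp
      _ ≤ C / n ! * (2 ^ n * ρ ^ n) := by
        have hn : (n : ℝ) ≤ 2 ^ n := by exact_mod_cast Nat.lt_two_pow_self.le
        have hyn : |y| ^ (n - 1) ≤ ρ ^ n :=
          (pow_le_pow_left₀ (abs_nonneg y) hy _).trans (pow_le_pow_right₀ hρ (Nat.sub_le n 1))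
        exact mul_le_mul (ha n) (mul_le_mul hn hyn (by positivity) (by positivity))
          (by positivity) ((abs_nonneg _).trans (ha n))
      _ = C * ((2 * ρ) ^ n / n !) := by rw [mul_pow]; ring
  have hu := (Real.summable_pow_div_factorial (2 * ρ)).mul_left C
  have hderiv := hasDerivAt_tsum_of_isPreconnected hu isOpen_ball
    (convex_ball 0 ρ).isPreconnected (fun n y _ => (hasDerivAt_pow n y).const_mul (a n)) hbound hz
    (summable_mul_pow_of_abs_le_div_factorial ha z) hz
  refine hderiv.congr_deriv ?_
  rw [(Summable.of_norm_bounded hu fun n => hbound n z hz).tsum_eq_zero_add]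
  simp only [CharP.cast_eq_zero, zero_mul, mul_zero, zero_add, Nat.add_sub_cancel, Nat.cast_add,
    Nat.cast_one]
  exact tsum_congr fun n => by ring

end PowerSeries

theorem Real.Gamma_add_one_le_Gamma_nat_add_add_one {μ : ℝ} (hμ : 0 ≤ μ) (n : ℕ) :
    Gamma (μ + 1) ≤ Gamma (n + μ + 1) := by
  induction n with
  | zero => simp
  | succ n ih =>
    have hpos : 0 < n + μ + 1 := by positivity
    calc Gamma (μ + 1) ≤ Gamma (n + μ + 1) := ih
      _ ≤ (n + μ + 1) * Gamma (n + μ + 1) :=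
        le_mul_of_one_le_left (Gamma_pos_of_pos hpos).le
          (by linarith [(n.cast_nonneg : (0 : ℝ) ≤ n)])
      _ = Gamma ((n + 1 : ℕ) + μ + 1) := by
        rw [← Gamma_add_one hpos.ne']; push_cast; ring_nf

section BesselSeries

def besselICoeff (μ : ℝ) (n : ℕ) : ℝ := (n ! * Gamma (n + μ + 1))⁻¹

def besselISeries (μ z : ℝ) : ℝ := ∑' n, besselICoeff μ n * z ^ n

variable {μ : ℝ}

theorem besselICoeff_pos (hμ : -1 < μ) (n : ℕ) : 0 < besselICoeff μ n := by
  have : 0 < Gamma (n + μ + 1) := Gamma_pos_of_pos (by linarith [(n.cast_nonneg : (0 : ℝ) ≤ n)])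
  unfold besselICoeff
  positivity

theorem abs_besselICoeff_le (hμ : 0 ≤ μ) (n : ℕ) :
    |besselICoeff μ n| ≤ (Gamma (μ + 1))⁻¹ / n ! := by
  have hΓ : 0 < Gamma (μ + 1) := Gamma_pos_of_pos (by positivity)
  rw [abs_of_pos (besselICoeff_pos (by linarith) n), besselICoeff, mul_inv, div_eq_mul_inv,
    mul_comm]
  gcongr
  exact Gamma_add_one_le_Gamma_nat_add_add_one hμ n

theorem succ_mul_besselICoeff_succ (μ : ℝ) (n : ℕ) :
    (n + 1) * besselICoeff μ (n + 1) = besselICoeff (μ + 1) n := by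
  have : (n + 1 : ℝ) ≠ 0 := by positivity
  simp only [besselICoeff, Nat.factorial_succ, Nat.cast_mul, Nat.cast_succ]
  field_simp
  ring_nf

theorem besselICoeff_eq_mul_besselICoeff_add_one (hμ : -1 < μ) (n : ℕ) :
    besselICoeff μ n = (n + μ + 1) * besselICoeff (μ + 1) n := by
  have hpos : 0 < n + μ + 1 := by linarith [(n.cast_nonneg : (0 : ℝ) ≤ n)]
  have hΓ := Gamma_pos_of_pos hpos
  rw [besselICoeff, besselICoeff, show (n : ℝ) + (μ + 1) + 1 = n + μ + 1 + 1 by ring,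
    Gamma_add_one hpos.ne']
  field_simp

theorem summable_besselISeries (hμ : 0 ≤ μ) (z : ℝ) :
    Summable fun n => besselICoeff μ n * z ^ n :=
  summable_mul_pow_of_abs_le_div_factorial (abs_besselICoeff_le hμ) z

theorem hasDerivAt_besselISeries (hμ : 0 ≤ μ) (z : ℝ) :
    HasDerivAt (besselISeries μ) (besselISeries (μ + 1) z) z := by
  have h := hasDerivAt_tsum_mul_pow_of_abs_le_div_factorial (abs_besselICoeff_le hμ) z
  simp only [succ_mul_besselICoeff_succ] at h
  exact h

theorem besselISeries_eq_add (hμ : 0 ≤ μ) (z : ℝ) :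
    besselISeries μ z = (μ + 1) * besselISeries (μ + 1) z + z * besselISeries (μ + 2) z := by
  have h₁ := ((summable_besselISeries (μ := μ + 1) (by linarith) z).hasSum).mul_left (μ + 1)
  have h₂ : HasSum (fun n => n * besselICoeff (μ + 1) n * z ^ n) (z * besselISeries (μ + 2) z) := by
    have h := ((summable_besselISeries (μ := μ + 2) (by linarith) z).hasSum).mul_left z
    have hshift : (fun n => z * (besselICoeff (μ + 2) n * z ^ n)) =
        fun n => ((n + 1 : ℕ) : ℝ) * besselICoeff (μ + 1) (n + 1) * z ^ (n + 1) := by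
      ext n
      rw [show μ + 2 = μ + 1 + 1 by ring, ← succ_mul_besselICoeff_succ]
      push_cast
      ring
    rw [hshift] at h
    refine (hasSum_nat_add_iff' 1).mp ?_
    simpa [besselISeries] using h
  have h := h₁.add h₂
  have hcoeff : (fun n => (μ + 1) * (besselICoeff (μ + 1) n * z ^ n) +
      n * besselICoeff (μ + 1) n * z ^ n) = fun n => besselICoeff μ n * z ^ n := by
    ext n
    rw [besselICoeff_eq_mul_besselICoeff_add_one (μ := μ) (by linarith)]
    ring
  rw [hcoeff] at h
  exact h.tsum_eq

theorem besselISeries_pos (hμ : 0 ≤ μ) {z : ℝ} (hz : 0 ≤ z) : 0 < besselISeries μ z :=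
  (summable_besselISeries hμ z).tsum_pos
    (fun n => mul_nonneg (besselICoeff_pos (by linarith) n).le (pow_nonneg hz n)) 0
    (by simpa using besselICoeff_pos (by linarith) 0)

theorem besselI_eq_rpow_mul_besselISeries (μ : ℝ) {x : ℝ} (hx : 0 < x) :
    besselI μ x = (x / 2) ^ μ * besselISeries μ ((x / 2) ^ 2) := by
  have hx2 : 0 < x / 2 := by positivity
  rw [besselI, besselISeries, ← tsum_mul_left]
  refine tsum_congr fun n => ?_
  rw [rpow_add hx2, show 2 * (n : ℝ) = (2 * n : ℕ) by push_cast; ring, rpow_natCast, pow_mul,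
    besselICoeff]
  ring

theorem besselI_pos (hμ : 0 ≤ μ) {x : ℝ} (hx : 0 < x) : 0 < besselI μ x := by
  rw [besselI_eq_rpow_mul_besselISeries μ hx]
  exact mul_pos (by positivity) (besselISeries_pos hμ (by positivity))

end BesselSeries

section RadialLaplacian

variable {d : ℕ} {f g : ℝ → ℝ} {x : ℝ}

theorem Filter.EventuallyEq.radLap (h : f =ᶠ[𝓝 x] g) : radLap d f =ᶠ[𝓝 x] radLap d g := by
  filter_upwards [h.eventuallyEq_nhds] with y hy
  rw [_root_.radLap, _root_.radLap, hy.deriv_eq, hy.deriv.deriv_eq]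

theorem radLap_eq_of_hasDerivAt {f' : ℝ → ℝ} {f'' : ℝ} (hf : ∀ y, HasDerivAt f (f' y) y)
    (hf' : HasDerivAt f' f'' x) : radLap d f x = f'' + ((d : ℝ) - 1) / x * f' x := by
  rw [radLap, funext fun y => (hf y).deriv, hf'.deriv]

end RadialLaplacian

/-- `(√τ r / 2)^{-μ} I_μ(√τ r)`, written as an even entire function of `r`, so that it stays smooth
through `r = 0`. -/
def besselIProfile (μ τ r : ℝ) : ℝ := besselISeries μ (τ / 4 * r ^ 2)

section BesselProfile

variable {μ : ℝ}

theorem hasDerivAt_besselIProfile (hμ : 0 ≤ μ) (τ r : ℝ) :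
    HasDerivAt (besselIProfile μ τ) (τ / 2 * r * besselIProfile (μ + 1) τ r) r := by
  have h := (hasDerivAt_besselISeries hμ (τ / 4 * r ^ 2)).comp r
    ((hasDerivAt_pow 2 r).const_mul (τ / 4))
  refine h.congr_deriv ?_
  rw [besselIProfile]
  push_cast
  ring

theorem besselI_sqrt_mul_eq (μ : ℝ) {τ r : ℝ} (hτ : 0 < τ) (hr : 0 < r) :
    besselI μ (√τ * r) = (√τ * r / 2) ^ μ * besselIProfile μ τ r := by
  rw [besselI_eq_rpow_mul_besselISeries μ (by positivity), besselIProfile, div_pow, mul_pow,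
    sq_sqrt hτ.le]
  ring_nf

theorem rpow_mul_deriv_besselIProfile (μ : ℝ) {τ R : ℝ} (hτ : 0 < τ) (hR : 0 < R) :
    (√τ * R / 2) ^ μ * (τ / 2 * R * besselIProfile (μ + 1) τ R) =
      √τ * besselI (μ + 1) (√τ * R) := by
  have hx : 0 < √τ * R / 2 := by positivity
  rw [besselI_sqrt_mul_eq _ hτ hR, rpow_add_one hx.ne']
  linear_combination (√τ * R / 2) ^ μ * R / 2 * besselIProfile (μ + 1) τ R * (sq_sqrt hτ.le).symm

theorem hasDerivAt_quadratic_add_besselIProfile (hμ : 0 ≤ μ) (a b K τ r : ℝ) :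
    HasDerivAt (fun s => a + b * s ^ 2 + K * besselIProfile μ τ s)
      (2 * b * r + K * (τ / 2 * r * besselIProfile (μ + 1) τ r)) r := by
  have h := (((hasDerivAt_pow 2 r).const_mul b).const_add a).add
    ((hasDerivAt_besselIProfile hμ τ r).const_mul K)
  refine h.congr_deriv ?_
  push_cast
  ring

-- For `ν = d/2 - 1` the radial Laplacian is `P'' + (2ν + 1)/r P'`, so this contains the Bessel
-- equation `ΔP = τ P`; it reduces to `besselISeries_eq_add`.
theorem radLap_quadratic_add_besselIProfile {d : ℕ} (hd : 2 ≤ d) (a b K τ : ℝ) {r : ℝ}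
    (hr : r ≠ 0) :
    radLap d (fun s => a + b * s ^ 2 + K * besselIProfile ((d : ℝ) / 2 - 1) τ s) r =
      2 * d * b + K * τ * besselIProfile ((d : ℝ) / 2 - 1) τ r := by
  set ν : ℝ := (d : ℝ) / 2 - 1 with hν
  have hν0 : 0 ≤ ν := by
    have : (2 : ℝ) ≤ d := by exact_mod_cast hd
    linarith
  have h' : HasDerivAt (fun s => 2 * b * s + K * (τ / 2 * s * besselIProfile (ν + 1) τ s))
      (2 * b + K * (τ / 2 * besselIProfile (ν + 1) τ r +
        τ / 2 * r * (τ / 2 * r * besselIProfile (ν + 1 + 1) τ r))) r := by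
    have h := (((hasDerivAt_id r).const_mul (2 * b)).add
      ((((hasDerivAt_id r).const_mul (τ / 2)).mul
        (hasDerivAt_besselIProfile (μ := ν + 1) (by linarith) τ r)).const_mul K))
    refine h.congr_deriv ?_
    simp only [id]
    ring
  rw [radLap_eq_of_hasDerivAt (hasDerivAt_quadratic_add_besselIProfile hν0 a b K τ) h',
    show besselIProfile ν τ r = (ν + 1) * besselIProfile (ν + 1) τ r +
      τ / 4 * r ^ 2 * besselIProfile (ν + 2) τ r from besselISeries_eq_add hν0 _,
    show ν + 1 + 1 = ν + 2 by ring]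
  field_simp
  rw [hν]
  ring

end BesselProfile

def torsionAmplitude (d : ℕ) (R τ : ℝ) : ℝ :=
  R / (d * τ ^ ((3 : ℝ) / 2)) *
    ((√τ * R / 2) ^ ((d : ℝ) / 2 - 1) / besselI ((d : ℝ) / 2 - 1 + 1) (√τ * R))

section Torsion

variable {d : ℕ} {R τ : ℝ}

theorem torsionW_eq_of_pos (hR : 0 < R) (hτ : 0 < τ) {r : ℝ} (hr : 0 < r) :
    torsionW d R τ r = (R ^ 2 - r ^ 2) / (2 * d * τ) + torsionAmplitude d R τ *
      (besselIProfile ((d : ℝ) / 2 - 1) τ r - besselIProfile ((d : ℝ) / 2 - 1) τ R) := by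
  set ν : ℝ := (d : ℝ) / 2 - 1
  have hscale : (√τ * r / 2) ^ ν * (r / R) ^ (-ν) = (√τ * R / 2) ^ ν := by
    rw [show √τ * r / 2 = √τ * R / 2 * (r / R) by field_simp, mul_rpow (by positivity)
      (by positivity), mul_assoc, ← rpow_add (by positivity), add_neg_cancel, rpow_zero, mul_one]
  rw [torsionW, torsionAmplitude, besselI_sqrt_mul_eq ν hτ hr, besselI_sqrt_mul_eq ν hτ hR,
    ← hscale]
  ring

theorem torsionAmplitude_mul_deriv_besselIProfile (hR : 0 < R) (hτ : 0 < τ) :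
    torsionAmplitude d R τ * (τ / 2 * R * besselIProfile ((d : ℝ) / 2 - 1 + 1) τ R) =
      R / (d * τ) := by
  have hI : besselI ((d : ℝ) / 2 - 1 + 1) (√τ * R) ≠ 0 :=
    (besselI_pos (by ring_nf; positivity) (by positivity)).ne'
  have hτ32 : τ ^ ((3 : ℝ) / 2) = τ * √τ := by
    rw [show (3 : ℝ) / 2 = 1 + 1 / 2 by norm_num, rpow_add hτ, rpow_one, sqrt_eq_rpow]
  rw [torsionAmplitude, mul_assoc, div_mul_eq_mul_div ((√τ * R / 2) ^ _),
    rpow_mul_deriv_besselIProfile _ hτ hR, mul_div_assoc, div_self hI, mul_one, hτ32]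
  field_simp

end Torsion

/-- `w` satisfies `Δ²w - τΔw = 1` in the ball of radius `R` and the clamped
boundary conditions `w(R) = 0`, `∂_n w(R) = 0`. -/
theorem torsionW_solves (d : ℕ) (hd : 2 ≤ d) (R τ : ℝ) (hR : 0 < R) (hτ : 0 < τ) :
    (∀ r ∈ Ioo (0 : ℝ) R,
        radLap d (radLap d (torsionW d R τ)) r - τ * radLap d (torsionW d R τ) r = 1) ∧
      torsionW d R τ R = 0 ∧ deriv (torsionW d R τ) R = 0 := by
  set K := torsionAmplitude d R τ
  have hw : ∀ r, 0 < r → torsionW d R τ =ᶠ[𝓝 r] fun s =>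
      (R ^ 2 / (2 * d * τ) - K * besselIProfile ((d : ℝ) / 2 - 1) τ R) +
        -1 / (2 * d * τ) * s ^ 2 + K * besselIProfile ((d : ℝ) / 2 - 1) τ s := fun r hr =>
    eventually_of_mem (Ioi_mem_nhds hr) fun s hs => by rw [torsionW_eq_of_pos hR hτ hs]; ring
  refine ⟨fun r hr => ?_, by simp [torsionW, div_self hR.ne'], ?_⟩
  · have hΔw : radLap d (torsionW d R τ) =ᶠ[𝓝 r]
        fun s => -1 / τ + 0 * s ^ 2 + K * τ * besselIProfile ((d : ℝ) / 2 - 1) τ s := by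
      refine (hw r hr.1).radLap.trans (eventually_of_mem (Ioi_mem_nhds hr.1) fun s hs => ?_)
      rw [radLap_quadratic_add_besselIProfile hd _ _ _ _ hs.ne']
      field_simp
      ring
    rw [hΔw.radLap.eq_of_nhds, hΔw.eq_of_nhds,
      radLap_quadratic_add_besselIProfile hd _ _ _ _ hr.1.ne']
    field_simp
    ring
  · have hν : 0 ≤ (d : ℝ) / 2 - 1 := by
      have : (2 : ℝ) ≤ d := by exact_mod_cast hd
      linarith
    rw [(hw R hR).deriv_eq, (hasDerivAt_quadratic_add_besselIProfile hν _ _ _ _ R).deriv,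
      torsionAmplitude_mul_deriv_besselIProfile hR hτ]
    field_simp
    ring
end
end

section
/- The modified Bessel function ratio satisfies the asymptotic expansion x I_ν(x)/I_{ν+1}(x) = d + x²/(d+2) − x⁴/((d+2)²(d+4)) + o(x⁴) as x → 0, where ν = d/2 − 1 and d ≥ 1. -/
open MeasureTheory Real Metric Set

noncomputable section

open Asymptotics Filter Topology

/-!
For `x > 0`, `I_μ(x) = (x/2)^μ g_μ(x²/4)` with `g_μ(t) = Σ t^k / (k! Γ(k+μ+1))` entire, so
`x I_ν(x) / I_{ν+1}(x) = 2 g_ν(t) / g_{ν+1}(t)` at `t = x²/4`. Since `Γ` increases on `[2, ∞)`,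
the tail of `g_μ` after `n` terms is at most `|t|^n e^{|t|} / Γ(n+μ+1)`, so dividing the quadratic
Taylor polynomials of `g_ν` and `g_{ν+1}` gives the ratio up to `O(t³) = O(x⁶)`, for every `ν > -1`.
-/

open scoped Nat

/-- Taylor coefficients of the entire function `t ↦ t^{-μ/2} I_μ(2√t)`. -/
def besselCoeff (μ : ℝ) (k : ℕ) : ℝ := 1 / (k ! * Gamma (k + μ + 1))

def besselSeries (μ t : ℝ) : ℝ := ∑' k, besselCoeff μ k * t ^ k

section Tail

variable {μ : ℝ} {n : ℕ}

lemma norm_besselCoeff_add_mul_pow_le (hn : 1 ≤ μ + n) (t : ℝ) (k : ℕ) :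
    ‖besselCoeff μ (k + n) * t ^ (k + n)‖ ≤ |t| ^ n / Gamma (n + μ + 1) * (|t| ^ k / k !) := by
  have hΓ : 0 < Gamma (n + μ + 1) := Gamma_pos_of_pos (by linarith)
  have hmono : Gamma (n + μ + 1) ≤ Gamma ((k + n : ℕ) + μ + 1) :=
    Gamma_strictMonoOn_Ici.monotoneOn (by simp; linarith) (by simp; linarith) (by simp)
  have hfac : (k ! : ℝ) ≤ (k + n)! := by exact_mod_cast Nat.factorial_le (by omega)
  have hΓk : 0 < Gamma ((k + n : ℕ) + μ + 1) := hΓ.trans_le hmono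
  rw [norm_mul, norm_pow, Real.norm_eq_abs, Real.norm_eq_abs, besselCoeff,
    abs_of_nonneg (by positivity)]
  calc 1 / ((k + n)! * Gamma ((k + n : ℕ) + μ + 1)) * |t| ^ (k + n)
      = |t| ^ n * |t| ^ k / ((k + n)! * Gamma ((k + n : ℕ) + μ + 1)) := by ring
    _ ≤ |t| ^ n * |t| ^ k / (k ! * Gamma (n + μ + 1)) := by gcongr
    _ = |t| ^ n / Gamma (n + μ + 1) * (|t| ^ k / k !) := by ring

lemma summable_besselCoeff_add_mul_pow (hn : 1 ≤ μ + n) (t : ℝ) :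
    Summable fun k ↦ besselCoeff μ (k + n) * t ^ (k + n) :=
  .of_norm_bounded ((summable_pow_div_factorial |t|).mul_left _)
    (norm_besselCoeff_add_mul_pow_le hn t)

lemma summable_besselCoeff_mul_pow (μ t : ℝ) : Summable fun k ↦ besselCoeff μ k * t ^ k := by
  obtain ⟨n, hn⟩ := exists_nat_ge (1 - μ)
  exact (summable_nat_add_iff n).mp (summable_besselCoeff_add_mul_pow (by linarith) t)

lemma abs_besselSeries_sub_sum_le (hn : 1 ≤ μ + n) (t : ℝ) :
    |besselSeries μ t - ∑ k ∈ Finset.range n, besselCoeff μ k * t ^ k| ≤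
      |t| ^ n * exp |t| / Gamma (n + μ + 1) := by
  rw [besselSeries, ← (summable_besselCoeff_mul_pow μ t).sum_add_tsum_nat_add n,
    add_sub_cancel_left]
  calc |∑' k, besselCoeff μ (k + n) * t ^ (k + n)|
      ≤ ∑' k, ‖besselCoeff μ (k + n) * t ^ (k + n)‖ :=
        norm_tsum_le_tsum_norm (summable_besselCoeff_add_mul_pow hn t).norm
    _ ≤ ∑' k, |t| ^ n / Gamma (n + μ + 1) * (|t| ^ k / k !) :=
        (summable_besselCoeff_add_mul_pow hn t).norm.tsum_le_tsum
          (norm_besselCoeff_add_mul_pow_le hn t) ((summable_pow_div_factorial |t|).mul_left _)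
    _ = |t| ^ n * exp |t| / Gamma (n + μ + 1) := by
        rw [tsum_mul_left, exp_eq_exp_ℝ, NormedSpace.exp_eq_tsum_div]; ring

end Tail

section Expansion

variable {μ : ℝ}

lemma besselSeries_sub_sum_isBigO {n : ℕ} (hn : 1 ≤ μ + n) :
    (fun t ↦ besselSeries μ t - ∑ k ∈ Finset.range n, besselCoeff μ k * t ^ k) =O[𝓝 0]
      (· ^ n) := by
  refine .of_bound (exp 1 / Gamma (n + μ + 1)) ?_
  filter_upwards [Icc_mem_nhds neg_one_lt_zero one_pos] with t ht
  have hΓ : 0 < Gamma (n + μ + 1) := Gamma_pos_of_pos (by linarith)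
  have ht1 : |t| ≤ 1 := abs_le.mpr ht
  calc ‖besselSeries μ t - ∑ k ∈ Finset.range n, besselCoeff μ k * t ^ k‖
      ≤ |t| ^ n * exp |t| / Gamma (n + μ + 1) := abs_besselSeries_sub_sum_le hn t
    _ ≤ |t| ^ n * exp 1 / Gamma (n + μ + 1) := by gcongr
    _ = exp 1 / Gamma (n + μ + 1) * ‖t ^ n‖ := by rw [norm_pow, Real.norm_eq_abs]; ring

lemma tendsto_besselSeries_zero (hμ : 0 ≤ μ) :
    Tendsto (besselSeries μ) (𝓝 0) (𝓝 (Gamma (μ + 1))⁻¹) := by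
  have h := (besselSeries_sub_sum_isBigO (μ := μ) (n := 1) (by simpa using hμ)).trans_tendsto
    ((continuous_pow 1).tendsto' 0 0 (by simp))
  simpa [besselCoeff] using h.add_const (besselCoeff μ 0)

lemma sum_range_three_besselCoeff_mul_pow (h₁ : μ + 1 ≠ 0) (h₂ : μ + 2 ≠ 0) (t : ℝ) :
    ∑ k ∈ Finset.range 3, besselCoeff μ k * t ^ k =
      (1 + t / (μ + 1) + t ^ 2 / (2 * (μ + 1) * (μ + 2))) / Gamma (μ + 1) := by
  have hΓ₂ : Gamma (μ + 2) = (μ + 1) * Gamma (μ + 1) := by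
    rw [← Gamma_add_one h₁]; ring_nf
  have hΓ₃ : Gamma (μ + 3) = (μ + 2) * ((μ + 1) * Gamma (μ + 1)) := by
    rw [← hΓ₂, ← Gamma_add_one h₂]; ring_nf
  simp only [Finset.sum_range_succ, Finset.sum_range_zero, besselCoeff]
  norm_num [add_comm _ μ, add_assoc, hΓ₂, hΓ₃]
  simp only [div_eq_mul_inv, mul_inv]
  ring

end Expansion

lemma Asymptotics.IsBigO.div_sub_of_sub {α 𝕜 : Type*} [NormedField 𝕜] {l : Filter α}
    {f g p q r k : α → 𝕜} {b : 𝕜} (hf : (fun a ↦ f a - p a) =O[l] k)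
    (hg : (fun a ↦ g a - q a) =O[l] k) (hpq : (fun a ↦ p a - r a * q a) =O[l] k)
    (hr : r =O[l] (fun _ ↦ (1 : 𝕜))) (hgb : Tendsto g l (𝓝 b)) (hb : b ≠ 0) :
    (fun a ↦ f a / g a - r a) =O[l] k := by
  have hnum : (fun a ↦ (f a - p a) - r a * (g a - q a) + (p a - r a * q a)) =O[l] k :=
    (hf.sub (by simpa using hr.mul hg)).add hpq
  refine (((hgb.inv₀ hb).isBigO_one 𝕜).mul hnum).congr' ?_ (by simp)
  filter_upwards [hgb.eventually_ne hb] with a ha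
  field_simp
  ring

section Ratio

variable {ν : ℝ}

lemma two_mul_sum_sub_mul_sum_eq (hν : -1 < ν) (t : ℝ) :
    2 * ∑ k ∈ Finset.range 3, besselCoeff ν k * t ^ k -
      (2 * (ν + 1) + 2 * t / (ν + 2) - 2 * t ^ 2 / ((ν + 2) ^ 2 * (ν + 3))) *
        ∑ k ∈ Finset.range 3, besselCoeff (ν + 1) k * t ^ k =
      t ^ 3 * ((t - ν * (ν + 3)) / (Gamma (ν + 1) * (ν + 1) * (ν + 2) ^ 3 * (ν + 3) ^ 2)) := by
  have hΓ := Gamma_pos_of_pos (by linarith : 0 < ν + 1)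
  rw [sum_range_three_besselCoeff_mul_pow (by linarith) (by linarith),
    sum_range_three_besselCoeff_mul_pow (by linarith) (by linarith),
    Gamma_add_one (s := ν + 1) (by linarith), show ν + 1 + 1 = ν + 2 by ring,
    show ν + 1 + 2 = ν + 3 by ring]
  have : ν + 1 ≠ 0 := by linarith
  have : ν + 2 ≠ 0 := by linarith
  have : ν + 3 ≠ 0 := by linarith
  field_simp
  ring

lemma besselSeries_ratio_sub_isBigO (hν : -1 < ν) :
    (fun t ↦ 2 * besselSeries ν t / besselSeries (ν + 1) t -
      (2 * (ν + 1) + 2 * t / (ν + 2) - 2 * t ^ 2 / ((ν + 2) ^ 2 * (ν + 3)))) =O[𝓝 0] (· ^ 3) := by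
  refine IsBigO.div_sub_of_sub (p := fun t ↦ 2 * ∑ k ∈ Finset.range 3, besselCoeff ν k * t ^ k)
    (q := fun t ↦ ∑ k ∈ Finset.range 3, besselCoeff (ν + 1) k * t ^ k) ?_
    (besselSeries_sub_sum_isBigO (by push_cast; linarith)) ?_ ?_
    (tendsto_besselSeries_zero (by linarith)) (inv_ne_zero (Gamma_pos_of_pos (by linarith)).ne')
  · simpa only [mul_sub] using
      (besselSeries_sub_sum_isBigO (μ := ν) (n := 3) (by push_cast; linarith)).const_mul_left 2
  · simp only [two_mul_sum_sub_mul_sum_eq hν]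
    refine ((isBigO_refl (· ^ 3) _).mul (Continuous.tendsto ?_ 0 |>.isBigO_one ℝ)).congr_right
      (by simp)
    fun_prop
  · exact (Continuous.tendsto (by fun_prop) 0).isBigO_one ℝ

end Ratio

lemma besselI_eq_rpow_mul_besselSeries (μ : ℝ) {x : ℝ} (hx : 0 < x) :
    besselI μ x = (x / 2) ^ μ * besselSeries μ (x ^ 2 / 4) := by
  rw [besselI, besselSeries, ← tsum_mul_left]
  refine tsum_congr fun k ↦ ?_
  rw [rpow_add (by positivity), rpow_mul (by positivity), rpow_two, rpow_natCast, besselCoeff]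
  ring

lemma besselI_ratio_eq (ν : ℝ) {x : ℝ} (hx : 0 < x) :
    x * besselI ν x / besselI (ν + 1) x =
      2 * besselSeries ν (x ^ 2 / 4) / besselSeries (ν + 1) (x ^ 2 / 4) := by
  have : (0 : ℝ) < (x / 2) ^ ν := by positivity
  rw [besselI_eq_rpow_mul_besselSeries ν hx, besselI_eq_rpow_mul_besselSeries (ν + 1) hx,
    rpow_add_one (by positivity)]
  field_simp

lemma besselI_ratio_sub_isBigO {ν : ℝ} (hν : -1 < ν) :
    (fun x ↦ x * besselI ν x / besselI (ν + 1) x -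
      (2 * (ν + 1) + x ^ 2 / (2 * (ν + 2)) - x ^ 4 / (8 * (ν + 2) ^ 2 * (ν + 3))))
      =O[𝓝[>] 0] (· ^ 6) := by
  have hsq : Tendsto (fun x : ℝ ↦ x ^ 2 / 4) (𝓝[>] 0) (𝓝 0) :=
    tendsto_nhdsWithin_of_tendsto_nhds (Continuous.tendsto' (by fun_prop) 0 0 (by simp))
  have hpow : (fun x : ℝ ↦ (x ^ 2 / 4) ^ 3) =O[𝓝[>] 0] (· ^ 6) :=
    (isBigO_const_mul_self (1 / 64) (· ^ 6) _).congr_left fun x ↦ by ring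
  refine ((besselSeries_ratio_sub_isBigO hν).comp_tendsto hsq).congr' ?_ .rfl |>.trans hpow
  filter_upwards [self_mem_nhdsWithin] with x hx
  simp only [Function.comp_apply, besselI_ratio_eq ν hx, div_eq_mul_inv, mul_inv]
  ring

/-- Asymptotic expansion of the modified Bessel ratio as `x → 0⁺`:
`x I_ν(x)/I_{ν+1}(x) = d + x²/(d+2) - x⁴/((d+2)²(d+4)) + o(x⁴)`, with `ν = d/2 - 1`. -/
theorem bessel_ratio_expansion (d : ℕ) (hd : 1 ≤ d) :
    (fun x : ℝ =>
        x * besselI ((d : ℝ) / 2 - 1) x / besselI ((d : ℝ) / 2 - 1 + 1) x -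
          ((d : ℝ) + x ^ 2 / (d + 2) - x ^ 4 / ((d + 2) ^ 2 * (d + 4)))) =o[𝓝[>] (0 : ℝ)]
      fun x : ℝ => x ^ 4 := by
  have hν : -1 < (d : ℝ) / 2 - 1 := by
    have : (1 : ℝ) ≤ d := by exact_mod_cast hd
    linarith
  refine (besselI_ratio_sub_isBigO hν).trans_isLittleO
    ((isLittleO_pow_pow (by norm_num)).mono nhdsWithin_le_nhds) |>.congr_left fun x ↦ ?_
  ring
end
end
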